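/- If T is a linear operator on Dirac chains such that ‖T(Δ_{σ^j}(p;α))‖_{B^r} ≤ C·‖σ‖·‖α‖ for some constant C > 0 and all j-difference k-chains with 0 ≤ j ≤ s and 0 ≤ k ≤ n, then ‖T(A)‖_{B^r} ≤ C·‖A‖_{B^s} for all Dirac k-chains A. -/
import Mathlib


noncomputable section

open Finsupp Filter

variable {E W : Type*} [NormedAddCommGroup E] [NormedSpace ℝ E]
  [NormedAddCommGroup W] [NormedSpace ℝ W]

/-- Translation of a Dirac chain through the vector `u`. -/
def transl (u : E) (A : E →₀ W) : E →₀ W := Finsupp.mapDomain (· + u) A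

/-- The difference operator `Δ_u = T_u - I`. -/
def del (u : E) (A : E →₀ W) : E →₀ W := transl u A - A

/-- Iterated difference chain along a list of vectors. -/
def diff : List E → (E →₀ W) → (E →₀ W)
  | [], A => A
  | u :: σ, A => del u (diff σ A)

/-- The product of the norms of the vectors in the list `σ`. -/
def lnorm (σ : List E) : ℝ := (σ.map norm).prod

/-- Costs of representations of `A` as sums of `j`-difference chains with `j ≤ r`. -/
def reps (r : ℕ) (A : E →₀ W) : Set ℝ :=
  {c | ∃ (m : ℕ) (σ : Fin m → List E) (p : Fin m → E) (α : Fin m → W),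
      (∀ i, (σ i).length ≤ r) ∧
      A = ∑ i, diff (σ i) (Finsupp.single (p i) (α i)) ∧
      c = ∑ i, lnorm (σ i) * ‖α i‖}

/-- The `B^r` norm of a Dirac chain. -/
def Bnorm (r : ℕ) (A : E →₀ W) : ℝ := sInf (reps r A)

/-- `M` is a `B^r`-bound for the cochain (differential form) `ω`. -/
def IsFormBound (r : ℕ) (ω : (E →₀ W) →ₗ[ℝ] ℝ) (M : ℝ) : Prop :=
  ∀ (σ : List E) (p : E) (α : W), σ.length ≤ r →
    |ω (diff σ (Finsupp.single p α))| ≤ M * lnorm σ * ‖α‖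

/-- The `B^r` norm of a differential form. -/
def formNorm (r : ℕ) (ω : (E →₀ W) →ₗ[ℝ] ℝ) : ℝ :=
  sInf {M | 0 ≤ M ∧ IsFormBound r ω M}

lemma lnorm_nonneg (σ : List E) : 0 ≤ lnorm σ := by
  apply List.prod_nonneg
  intro x hx
  simp only [List.mem_map] at hx
  obtain ⟨y, -, rfl⟩ := hx
  exact norm_nonneg y

lemma reps_nonneg {r : ℕ} {A : E →₀ W} {c : ℝ} (hc : c ∈ reps r A) : 0 ≤ c := by
  obtain ⟨m, σ, p, α, -, -, rfl⟩ := hc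
  exact Finset.sum_nonneg fun i _ => mul_nonneg (lnorm_nonneg _) (norm_nonneg _)

lemma reps_bddBelow (r : ℕ) (A : E →₀ W) : BddBelow (reps r A) :=
  ⟨0, fun c hc => reps_nonneg hc⟩

lemma reps_nonempty (r : ℕ) (A : E →₀ W) : (reps r A).Nonempty := by
  classical
  set m := A.support.card with hm
  let e : Fin m ≃ A.support := A.support.equivFin.symm
  refine ⟨∑ i : Fin m, lnorm ([] : List E) * ‖A (e i : E)‖, m, fun _ => [],
    fun i => (e i : E), fun i => A (e i : E), fun i => by simp, ?_, rfl⟩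
  have h1 : ∑ i : Fin m, diff ([] : List E) (Finsupp.single ((e i : E)) (A (e i : E)))
      = ∑ x : A.support, Finsupp.single (x : E) (A (x : E)) :=
    Fintype.sum_equiv e _ _ (fun i => rfl)
  rw [h1, Finset.sum_coe_sort A.support (fun x => Finsupp.single x (A x))]
  exact (Finsupp.sum_single A).symm

lemma reps_add {r : ℕ} {A₁ A₂ : E →₀ W} {c₁ c₂ : ℝ}
    (h₁ : c₁ ∈ reps r A₁) (h₂ : c₂ ∈ reps r A₂) : c₁ + c₂ ∈ reps r (A₁ + A₂) := by
  obtain ⟨m₁, σ₁, p₁, α₁, hl₁, hA₁, hc₁⟩ := h₁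
  obtain ⟨m₂, σ₂, p₂, α₂, hl₂, hA₂, hc₂⟩ := h₂
  refine ⟨m₁ + m₂, Fin.addCases σ₁ σ₂, Fin.addCases p₁ p₂, Fin.addCases α₁ α₂,
    fun i => ?_, ?_, ?_⟩
  · refine Fin.addCases (fun i => ?_) (fun i => ?_) i <;> simp [hl₁, hl₂]
  · rw [Fin.sum_univ_add]
    simp only [Fin.addCases_left, Fin.addCases_right]
    rw [← hA₁, ← hA₂]
  · rw [Fin.sum_univ_add]
    simp only [Fin.addCases_left, Fin.addCases_right]
    rw [← hc₁, ← hc₂]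

lemma Bnorm_le {r : ℕ} {A : E →₀ W} {c : ℝ} (hc : c ∈ reps r A) : Bnorm r A ≤ c :=
  csInf_le (reps_bddBelow r A) hc

lemma Bnorm_add_le (r : ℕ) (A₁ A₂ : E →₀ W) :
    Bnorm r (A₁ + A₂) ≤ Bnorm r A₁ + Bnorm r A₂ := by
  have key : ∀ c₁ ∈ reps r A₁, ∀ c₂ ∈ reps r A₂, Bnorm r (A₁ + A₂) ≤ c₁ + c₂ :=
    fun c₁ h₁ c₂ h₂ => Bnorm_le (reps_add h₁ h₂)
  have h2 : ∀ c₁ ∈ reps r A₁, Bnorm r (A₁ + A₂) - c₁ ≤ Bnorm r A₂ := by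
    intro c₁ h₁
    apply le_csInf (reps_nonempty r A₂)
    intro c₂ h₂
    linarith [key c₁ h₁ c₂ h₂]
  have h3 : Bnorm r (A₁ + A₂) - Bnorm r A₂ ≤ Bnorm r A₁ := by
    apply le_csInf (reps_nonempty r A₁)
    intro c₁ h₁
    linarith [h2 c₁ h₁]
  linarith

lemma Bnorm_zero_le (r : ℕ) : Bnorm r (0 : E →₀ W) ≤ 0 := by
  refine Bnorm_le ⟨0, fun i => [], fun i => 0, fun i => 0, fun i => by simp, by simp, by simp⟩

lemma Bnorm_sum_le {ι : Type*} (r : ℕ) (t : Finset ι) (B : ι → (E →₀ W)) :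
    Bnorm r (∑ i ∈ t, B i) ≤ ∑ i ∈ t, Bnorm r (B i) := by
  classical
  induction t using Finset.cons_induction with
  | empty => simpa using Bnorm_zero_le r
  | cons a t ha ih =>
    rw [Finset.sum_cons, Finset.sum_cons]
    exact le_trans (Bnorm_add_le r _ _) (by linarith)

/-- If a linear operator `T` on Dirac chains satisfies
`‖T(Δ_{σ^j}(p;α))‖_{B^r} ≤ C·‖σ‖·‖α‖` for some `C > 0` and all `j`-difference
chains with `0 ≤ j ≤ s`, then `‖T(A)‖_{B^r} ≤ C·‖A‖_{B^s}` for all Dirac chains `A`. -/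
theorem operator_Bnorm_bound_of_bound_on_difference_chains {n : ℕ} {W₁ W₂ : Type*}
    [NormedAddCommGroup W₁] [NormedSpace ℝ W₁]
    [NormedAddCommGroup W₂] [NormedSpace ℝ W₂]
    (r s : ℕ) (C : ℝ) (hC : 0 < C)
    (T : ((EuclideanSpace ℝ (Fin n)) →₀ W₁) →ₗ[ℝ] ((EuclideanSpace ℝ (Fin n)) →₀ W₂))
    (hT : ∀ (σ : List (EuclideanSpace ℝ (Fin n))) (p : EuclideanSpace ℝ (Fin n)) (α : W₁),
      σ.length ≤ s → Bnorm r (T (diff σ (Finsupp.single p α))) ≤ C * lnorm σ * ‖α‖) :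
    ∀ A : (EuclideanSpace ℝ (Fin n)) →₀ W₁, Bnorm r (T A) ≤ C * Bnorm s A := by
  intro A
  have key : ∀ c ∈ reps s A, Bnorm r (T A) ≤ C * c := by
    rintro c ⟨m, σ, p, α, hl, rfl, rfl⟩
    rw [map_sum]
    refine le_trans (Bnorm_sum_le r _ _) ?_
    rw [Finset.mul_sum]
    refine Finset.sum_le_sum fun i _ => ?_
    rw [← mul_assoc]
    exact hT (σ i) (p i) (α i) (hl i)
  have hdiv : Bnorm r (T A) / C ≤ Bnorm s A := by
    apply le_csInf (reps_nonempty s A)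
    intro c hc
    rw [div_le_iff₀ hC, mul_comm]
    exact key c hc
  calc Bnorm r (T A) = C * (Bnorm r (T A) / C) := by field_simp
    _ ≤ C * Bnorm s A := by nlinarith [hdiv]
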